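/- Let U ⊆ ℝ² be open and bounded, ε > 0, and let u ∈ C^∞(U), g ∈ C^∞(U) satisfy -Δ_∞u - εΔu = g pointwise in U. Let ξ ∈ C_c²(U), and let α, κ satisfy either (α ≥ 2 and κ ≥ 0) or (α > 0 and κ > 0). Then the following identity holds: ∫_U |D²u Du|² (|Du|²+κ)^{α-3} [ 2(|Du|²+κ) + (α-2)|Du|² ] ξ² dx + ε ∫_U (Δu)² (|Du|²+κ)^{α-3} [ 2(|Du|²+κ) + (α-2)|Du|² ] ξ² dx + ∫_U ⟨Du, Dξ⟩² |Du|² (|Du|²+κ)^{α-2} dx = -2 ∫_U (|Du|²+κ)^{α-3} [ (|Du|²+κ) + (α-2)|Du|² ] ⟨Du, Dξ⟩ (Δ_∞u) ξ dx - ∫_U ( Σ_{i,k} ξ_{ik} u_k u_i ) |Du|² (|Du|²+κ)^{α-2} ξ dx - 2 ∫_U |Du|² (|Du|²+κ)^{α-2} ⟨D²u Du, Dξ⟩ ξ dx - ∫_U g Δu (|Du|²+κ)^{α-3} [ 2(|Du|²+κ) + (α-2)|Du|² ] ξ² dx, where in the case κ = 0 and α ≥ 2 the combination (|Du|²+κ)^{α-3}[2(|Du|²+κ)+(α-2)|Du|²]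 is interpreted as α|Du|^{2α-4} and (|Du|²+κ)^{α-3}[(|Du|²+κ)+(α-2)|Du|²] as (α-1)|Du|^{2α-4}. -/

import Mathlib

open MeasureTheory Metric
open scoped ENNReal RealInnerProductSpace BigOperators

noncomputable section

abbrev E2 : Type := EuclideanSpace ℝ (Fin 2)

/-- Partial derivative in the `i`-th coordinate direction. -/
def pd (i : Fin 2) (φ : E2 → ℝ) (x : E2) : ℝ :=
  fderiv ℝ φ x (EuclideanSpace.single i 1)

/-- Second partial derivative. -/
def pd2 (i j : Fin 2) (φ : E2 → ℝ) (x : E2) : ℝ :=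
  pd i (pd j φ) x

/-- The ∞-Laplacian `Δ_∞ φ = Σ_{i,j} φ_i φ_j φ_{ij}`. -/
def infLap (φ : E2 → ℝ) (x : E2) : ℝ :=
  ∑ i : Fin 2, ∑ j : Fin 2, pd i φ x * pd j φ x * pd2 i j φ x

/-- The ordinary Laplacian. -/
def lap (φ : E2 → ℝ) (x : E2) : ℝ := pd2 0 0 φ x + pd2 1 1 φ x

/-- `|Dφ|²`. -/
def gradSq (φ : E2 → ℝ) (x : E2) : ℝ := ∑ i : Fin 2, (pd i φ x) ^ 2

/-- `|D²φ Dφ|²`. -/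
def hessGradSq (φ : E2 → ℝ) (x : E2) : ℝ :=
  ∑ i : Fin 2, (∑ j : Fin 2, pd2 i j φ x * pd j φ x) ^ 2

/-- Viscosity solution of `-Δ_∞ u = f` on `Ω`. -/
def IsViscositySol (Ω : Set E2) (f u : E2 → ℝ) : Prop :=
  ∀ φ : E2 → ℝ, ContDiff ℝ 2 φ →
    (∀ x₀ ∈ Ω, IsLocalMaxOn (fun y => u y - φ y) Ω x₀ → -infLap φ x₀ ≤ f x₀) ∧
    (∀ x₀ ∈ Ω, IsLocalMinOn (fun y => u y - φ y) Ω x₀ → f x₀ ≤ -infLap φ x₀)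

/-- `G` is a weak gradient of `v` on `Ω`. -/
def HasWeakGradOn (v : E2 → ℝ) (G : E2 → E2) (Ω : Set E2) : Prop :=
  LocallyIntegrableOn v Ω volume ∧ LocallyIntegrableOn (fun x => ‖G x‖) Ω volume ∧
    ∀ φ : E2 → ℝ, ContDiff ℝ (⊤ : ℕ∞) φ → HasCompactSupport φ → tsupport φ ⊆ Ω →
      ∀ i : Fin 2, ∫ x in Ω, v x * pd i φ x = - ∫ x in Ω, G x i * φ x

/-- `G ∈ L^p_loc(Ω; ℝ²)`. -/
def MemLpLocOn (G : E2 → E2) (p : ℝ) (Ω : Set E2) : Prop :=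
  ∀ K : Set E2, K ⊆ Ω → IsCompact K → IntegrableOn (fun x => ‖G x‖ ^ p) K volume

/-- `v ∈ W^{1,p}_loc(Ω)`: there is a weak gradient of `v` lying in `L^p_loc(Ω;ℝ²)`. -/
def MemW1pLoc (v : E2 → ℝ) (p : ℝ) (Ω : Set E2) : Prop :=
  ∃ G : E2 → E2, HasWeakGradOn v G Ω ∧ MemLpLocOn G p Ω

/-- Divergence of a vector field. -/
def divg (Φ : E2 → E2) (x : E2) : ℝ := ∑ i : Fin 2, pd i (fun y => Φ y i) x

/-- The admissible pairings defining the BV norm of `f` on `U`. -/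
def bvPairings (f : E2 → ℝ) (U : Set E2) : Set ℝ :=
  { r | ∃ Φ : E2 → E2, ContDiff ℝ 1 Φ ∧ HasCompactSupport Φ ∧ tsupport Φ ⊆ U ∧
      (∀ x, ‖Φ x‖ ≤ 1) ∧ r = ∫ x in U, f x * divg Φ x }

/-- `‖f‖_{BV(U)}`. -/
def bvNorm (f : E2 → ℝ) (U : Set E2) : ℝ := sSup (bvPairings f U)

/-- `f ∈ BV_loc(Ω)`. -/
def BVloc (f : E2 → ℝ) (Ω : Set E2) : Prop :=
  ∀ U : Set E2, IsOpen U → IsCompact (closure U) → closure U ⊆ Ω →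
    BddAbove (bvPairings f U)

/-- `sup_s |h|`. -/
def supAbsOn (h : E2 → ℝ) (s : Set E2) : ℝ := sSup ((fun y => |h y|) '' s)

/-- The weight `(|Du|²+κ)^{α-3}[2(|Du|²+κ)+(α-2)|Du|²]`, interpreted as
`α|Du|^{2α-4}` when `κ = 0`. -/
def wtA (α κ : ℝ) (u : E2 → ℝ) (x : E2) : ℝ :=
  if κ = 0 then α * gradSq u x ^ (α - 2)
  else (gradSq u x + κ) ^ (α - 3) * (2 * (gradSq u x + κ) + (α - 2) * gradSq u x)

/-- The weight `(|Du|²+κ)^{α-3}[(|Du|²+κ)+(α-2)|Du|²]`, interpreted as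
`(α-1)|Du|^{2α-4}` when `κ = 0`. -/
def wtB (α κ : ℝ) (u : E2 → ℝ) (x : E2) : ℝ :=
  if κ = 0 then (α - 1) * gradSq u x ^ (α - 2)
  else (gradSq u x + κ) ^ (α - 3) * ((gradSq u x + κ) + (α - 2) * gradSq u x)

lemma contDiffAt_pd {n : ℕ} {φ : E2 → ℝ} {x : E2} (i : Fin 2)
    (h : ContDiffAt ℝ (n+1) φ x) : ContDiffAt ℝ n (pd i φ) x := by
  have h1 : ContDiffAt ℝ n (fderiv ℝ φ) x := h.fderiv_right (by norm_cast)
  exact h1.clm_apply contDiffAt_const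

lemma hasFDerivAt_pd {φ : E2 → ℝ} {x : E2} (j : Fin 2)
    (h : ContDiffAt ℝ 2 φ x) : HasFDerivAt (pd j φ) (fderiv ℝ (pd j φ) x) x := by
  have : ContDiffAt ℝ 1 (pd j φ) x := contDiffAt_pd j (by exact_mod_cast h)
  exact (this.differentiableAt one_ne_zero).hasFDerivAt

lemma pd2_comm {φ : E2 → ℝ} {x : E2} (h : ContDiffAt ℝ 2 φ x) (i j : Fin 2) :
    pd2 i j φ x = pd2 j i φ x := by
  have hsym := h.isSymmSndFDerivAt (by norm_num)
  have hd : DifferentiableAt ℝ (fderiv ℝ φ) x :=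
    (h.fderiv_right (m := 1) (by norm_num)).differentiableAt one_ne_zero
  have key : ∀ a b : Fin 2, pd2 a b φ x =
      fderiv ℝ (fderiv ℝ φ) x (EuclideanSpace.single a 1) (EuclideanSpace.single b 1) := by
    intro a b
    have : pd b φ = fun y => (fderiv ℝ φ y) (EuclideanSpace.single b 1) := rfl
    rw [show pd2 a b φ x = fderiv ℝ (fun y => (fderiv ℝ φ y) (EuclideanSpace.single b 1)) x
        (EuclideanSpace.single a 1) from rfl]
    rw [fderiv_clm_apply hd (differentiableAt_const _)]
    simp
  rw [key, key, hsym.eq]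

lemma gradSq_nonneg (u : E2 → ℝ) (x : E2) : 0 ≤ gradSq u x :=
  Finset.sum_nonneg fun i _ => sq_nonneg _

variable {α κ : ℝ}

lemma kappa_pos (hακ : (2 ≤ α ∧ 0 ≤ κ) ∨ (0 < α ∧ 0 < κ)) (hκ : κ ≠ 0) : 0 < κ := by
  rcases hακ with ⟨_, h⟩ | ⟨_, h⟩
  · exact lt_of_le_of_ne h (Ne.symm hκ)
  · exact h

lemma alpha_two (hακ : (2 ≤ α ∧ 0 ≤ κ) ∨ (0 < α ∧ 0 < κ)) (hκ : κ = 0) : 2 ≤ α := by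
  rcases hακ with ⟨h, _⟩ | ⟨_, h⟩
  · exact h
  · exact absurd hκ (ne_of_gt h)

lemma wtA_eq (hακ : (2 ≤ α ∧ 0 ≤ κ) ∨ (0 < α ∧ 0 < κ)) (u : E2 → ℝ) (x : E2) :
    wtA α κ u x = wtB α κ u x + (gradSq u x + κ) ^ (α - 2) := by
  by_cases hκ : κ = 0
  · simp only [wtA, wtB, hκ, if_true, add_zero, if_pos]; ring
  · have hw : 0 < gradSq u x + κ := by
      have := gradSq_nonneg u x; have := kappa_pos hακ hκ; linarith
    simp only [wtA, wtB, if_neg hκ]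
    have h1 : (gradSq u x + κ) ^ (α - 3) * (gradSq u x + κ) = (gradSq u x + κ) ^ (α - 2) := by
      rw [← Real.rpow_add_one (ne_of_gt hw) (α - 3)]; ring_nf
    nlinarith [h1]

lemma rho_hasFDeriv (hακ : (2 ≤ α ∧ 0 ≤ κ) ∨ (0 < α ∧ 0 < κ)) {u : E2 → ℝ} {x : E2} {L : E2 →L[ℝ] ℝ}
    (hq : HasFDerivAt (gradSq u) L x) :
    HasFDerivAt (fun y => gradSq u y * (gradSq u y + κ) ^ (α - 2))
      (wtB α κ u x • L) x := by
  by_cases hκ : κ = 0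
  · have hα : 2 ≤ α := alpha_two hακ hκ
    have hfun : (fun y => gradSq u y * (gradSq u y + κ) ^ (α - 2))
        = fun y => gradSq u y ^ (α - 1) := by
      funext y
      rw [hκ, add_zero]
      rcases eq_or_lt_of_le (gradSq_nonneg u y) with h0 | h0
      · rw [← h0, zero_mul, Real.zero_rpow (show α - 1 ≠ 0 by intro h; linarith)]
      · rw [← Real.rpow_one_add' (le_of_lt h0) (show 1 + (α - 2) ≠ 0 by intro h; linarith)]
        ring_nf
    rw [hfun]
    have := hq.rpow_const (p := α - 1) (Or.inr (by linarith))
    have hsc : (α - 1) * gradSq u x ^ (α - 1 - 1) = wtB α κ u x := by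
      rw [wtB, if_pos hκ]; ring_nf
    rw [hsc] at this; exact this
  · have hκ' : 0 < κ := kappa_pos hακ hκ
    have hw : 0 < gradSq u x + κ := by have := gradSq_nonneg u x; linarith
    have h1 : HasFDerivAt (fun y => gradSq u y + κ) L x := hq.add_const κ
    have h2 := h1.rpow_const (p := α - 2) (Or.inl (ne_of_gt hw))
    have h3 := hq.mul h2
    have hsc : gradSq u x • (((α - 2) * (gradSq u x + κ) ^ (α - 2 - 1)) • L)
        + ((gradSq u x + κ) ^ (α - 2)) • L = wtB α κ u x • L := by
      rw [smul_smul, ← add_smul]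
      congr 1
      rw [wtB, if_neg hκ]
      have h4 : (gradSq u x + κ) ^ (α - 3) * (gradSq u x + κ) = (gradSq u x + κ) ^ (α - 2) := by
        rw [← Real.rpow_add_one (ne_of_gt hw) (α - 3)]; ring_nf
      have h5 : (α - 2 - 1) = α - 3 := by ring
      rw [h5, ← h4]; ring
    rw [hsc] at h3; exact h3

lemma abs_coord_le_norm (z : E2) (i : Fin 2) : |z i| ≤ ‖z‖ := by
  rw [EuclideanSpace.norm_eq]
  calc |z i| = Real.sqrt (‖z i‖^2) := by
        rw [Real.norm_eq_abs, Real.sqrt_sq_eq_abs, abs_abs]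
    _ ≤ Real.sqrt (∑ j : Fin 2, ‖z j‖^2) := Real.sqrt_le_sqrt
        (Finset.single_le_sum (f := fun j => ‖z j‖^2) (fun j _ => sq_nonneg _)
          (Finset.mem_univ i))

lemma pd_zero_outside {f : E2 → ℝ} {K : Set E2} (hKc : IsClosed K)
    (hz : ∀ x ∉ K, f x = 0) {x : E2} (hx : x ∉ K) (i : Fin 2) : pd i f x = 0 := by
  have hev : f =ᶠ[nhds x] (fun _ => (0:ℝ)) :=
    Filter.eventuallyEq_of_mem (hKc.isOpen_compl.mem_nhds hx) (fun y hy => hz y hy)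
  rw [pd, hev.fderiv_eq, fderiv_fun_const]
  simp

lemma divergence_integral_zero (f0 f1 : E2 → ℝ) (K : Set E2) (hK : IsCompact K)
    (hd0 : ∀ x, HasFDerivAt f0 (fderiv ℝ f0 x) x)
    (hd1 : ∀ x, HasFDerivAt f1 (fderiv ℝ f1 x) x)
    (hz0 : ∀ x ∉ K, f0 x = 0) (hz1 : ∀ x ∉ K, f1 x = 0)
    (hcont : Continuous fun x => pd 0 f0 x + pd 1 f1 x) :
    ∫ x, (pd 0 f0 x + pd 1 f1 x) = 0 := by
  obtain ⟨R, hR⟩ := hK.isBounded.subset_closedBall 0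
  set M : ℝ := |R| + 1 with hM
  have hRM : R ≤ |R| := le_abs_self R
  -- the equivalence
  set ψ : (Fin 2 → ℝ) ≃L[ℝ] E2 := (EuclideanSpace.equiv (Fin 2) ℝ).symm with hψ
  have hψe : ∀ i : Fin 2, ψ (Pi.single i 1) = EuclideanSpace.single i 1 := fun i => rfl
  have hψcoord : ∀ (y : Fin 2 → ℝ) (i : Fin 2), (ψ y) i = y i := fun y i => rfl
  have hout : ∀ z : E2, (∃ i, M ≤ |z i|) → z ∉ K := by
    rintro z ⟨i, hi⟩ hzK
    have := abs_coord_le_norm z i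
    have h2 : ‖z‖ ≤ R := by simpa [Metric.mem_closedBall, dist_eq_norm] using hR hzK
    simp only [hM] at hi; linarith
  set a : Fin 2 → ℝ := fun _ => -M with ha
  set b : Fin 2 → ℝ := fun _ => M with hb
  have hle : a ≤ b := fun i => by simp [ha, hb, hM]; linarith [abs_nonneg R]
  set f : Fin 2 → (Fin 2 → ℝ) → ℝ := fun i y => (if i = 0 then f0 else f1) (ψ y) with hf
  set f' : Fin 2 → (Fin 2 → ℝ) → (Fin 2 → ℝ) →L[ℝ] ℝ :=
    fun i y => (fderiv ℝ (if i = 0 then f0 else f1) (ψ y)).comp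
      (ψ : (Fin 2 → ℝ) →L[ℝ] E2) with hf'
  have hMpos : (0:ℝ) < M := by have := abs_nonneg R; simp only [hM]; linarith
  have Hd : ∀ y : Fin 2 → ℝ, ∀ i, HasFDerivAt (f i) (f' i y) y := by
    intro y i
    by_cases h : i = 0 <;> simp only [hf, hf', h, if_pos, if_true, if_neg, if_false]
    · exact (hd0 (ψ y)).comp y ((ψ : (Fin 2 → ℝ) →L[ℝ] E2).hasFDerivAt)
    · exact (hd1 (ψ y)).comp y ((ψ : (Fin 2 → ℝ) →L[ℝ] E2).hasFDerivAt)
  have hdiv : ∀ y : Fin 2 → ℝ, (∑ i : Fin 2, f' i y (Pi.single i 1))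
      = pd 0 f0 (ψ y) + pd 1 f1 (ψ y) := by
    intro y
    rw [Fin.sum_univ_two]
    simp only [hf', ContinuousLinearMap.comp_apply]
    rw [show ((ψ : (Fin 2 → ℝ) →L[ℝ] E2) (Pi.single 0 1)) = EuclideanSpace.single 0 1 from rfl,
        show ((ψ : (Fin 2 → ℝ) →L[ℝ] E2) (Pi.single 1 1)) = EuclideanSpace.single 1 1 from rfl]
    simp [pd]
  have hψc : Continuous fun y : Fin 2 → ℝ => ψ y := ψ.continuous
  have key := MeasureTheory.integral_divergence_of_hasFDerivAt_off_countable'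
    (a := a) (b := b) hle f f' ∅ Set.countable_empty
    (fun i => ((by
      by_cases h : i = 0 <;> simp only [hf, h, if_true, if_false, if_pos, if_neg]
      · exact (continuous_iff_continuousAt.2 fun x => (hd0 x).continuousAt).comp hψc
      · exact (continuous_iff_continuousAt.2 fun x => (hd1 x).continuousAt).comp hψc) :
        Continuous (f i)).continuousOn)
    (fun y _ i => Hd y i)
    (by
      apply ContinuousOn.integrableOn_compact isCompact_Icc
      have : Continuous fun y : Fin 2 → ℝ => pd 0 f0 (ψ y) + pd 1 f1 (ψ y) := hcont.comp hψc
      exact (this.congr fun y => (hdiv y).symm).continuousOn)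
  -- faces vanish
  have hface : ∀ (i : Fin 2) (c : ℝ), |c| = M →
      ∀ x : Fin 1 → ℝ, f i (i.insertNth c x) = 0 := by
    intro i c hc x
    have hcoord : (ψ (i.insertNth c x)) i = c := by rw [hψcoord, Fin.insertNth_apply_same]
    have hzK : ψ (i.insertNth c x) ∉ K := hout _ ⟨i, by rw [hcoord, hc]⟩
    by_cases h : i = 0 <;> simp only [hf, h, if_true, if_false, if_pos, if_neg]
    · exact hz0 _ (by rwa [← h])
    · exact hz1 _ hzK
  have hfacesum : (∑ i : Fin 2,
      ((∫ x in Set.Icc (a ∘ i.succAbove) (b ∘ i.succAbove), f i (i.insertNth (b i) x)) -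
        ∫ x in Set.Icc (a ∘ i.succAbove) (b ∘ i.succAbove), f i (i.insertNth (a i) x))) = 0 := by
    apply Finset.sum_eq_zero
    intro i _
    have h1 : ∀ x : Fin 1 → ℝ, f i (i.insertNth (b i) x) = 0 :=
      hface i (b i) (abs_of_pos hMpos)
    have h2 : ∀ x : Fin 1 → ℝ, f i (i.insertNth (a i) x) = 0 :=
      hface i (a i) (by rw [show a i = -M from rfl, abs_neg, abs_of_pos hMpos])
    simp [h1, h2]
  rw [hfacesum] at key
  -- now transfer
  have hmp : MeasurePreserving (fun y : Fin 2 → ℝ => ψ y) volume volume := by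
    exact (EuclideanSpace.volume_preserving_symm_measurableEquiv_toLp (Fin 2)).symm
  have hme : MeasurableEmbedding (fun y : Fin 2 → ℝ => ψ y) :=
    ψ.toHomeomorph.measurableEmbedding
  have h1 : ∫ x, (pd 0 f0 x + pd 1 f1 x)
      = ∫ y : Fin 2 → ℝ, (pd 0 f0 (ψ y) + pd 1 f1 (ψ y)) :=
    (hmp.integral_comp hme _).symm
  have h2 : ∫ y : Fin 2 → ℝ, (pd 0 f0 (ψ y) + pd 1 f1 (ψ y))
      = ∫ y in Set.Icc a b, (pd 0 f0 (ψ y) + pd 1 f1 (ψ y)) := by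
    refine (setIntegral_eq_integral_of_forall_compl_eq_zero ?_).symm
    intro y hy
    have : ∃ i, M ≤ |y i| := by
      by_contra hcon
      push_neg at hcon
      exact hy ⟨fun i => by have := hcon i; simp [ha]; cases abs_lt.1 this; linarith,
                fun i => by have := hcon i; simp [hb]; cases abs_lt.1 this; linarith⟩
    obtain ⟨i, hi⟩ := this
    have hzK : ψ y ∉ K := hout _ ⟨i, by rw [hψcoord]; exact hi⟩
    rw [pd_zero_outside hK.isClosed hz0 hzK, pd_zero_outside hK.isClosed hz1 hzK, add_zero]
  have h3 : ∫ y in Set.Icc a b, (pd 0 f0 (ψ y) + pd 1 f1 (ψ y))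
      = ∫ y in Set.Icc a b, ∑ i : Fin 2, f' i y (Pi.single i 1) := by
    apply setIntegral_congr_fun measurableSet_Icc
    intro y _
    exact (hdiv y).symm
  rw [h1, h2, h3]
  rw [key]

lemma pd_eval (i : Fin 2) (φ : E2 → ℝ) (x : E2) :
    pd i φ x = fderiv ℝ φ x (EuclideanSpace.single i 1) := rfl

lemma fderiv_single_pd {φ : E2 → ℝ} {x : E2} (i : Fin 2) :
    fderiv ℝ φ x (EuclideanSpace.single i 1) = pd i φ x := rfl

lemma pd_pd {φ : E2 → ℝ} (i j : Fin 2) (x : E2) : pd i (pd j φ) x = pd2 i j φ x := rfl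

lemma pd_pd2 {φ : E2 → ℝ} (i j k : Fin 2) (x : E2) :
    pd i (pd2 j k φ) x = pd2 i j (pd k φ) x := rfl

-- test: product rule mechanics
lemma contDiffAt_pd_top {φ : E2 → ℝ} {x : E2} (i : Fin 2)
    (h : ContDiffAt ℝ (⊤ : ℕ∞) φ x) : ContDiffAt ℝ (⊤ : ℕ∞) (pd i φ) x := by
  have h1 : ContDiffAt ℝ (⊤ : ℕ∞) (fderiv ℝ φ) x := h.fderiv_right (by simp)
  exact h1.clm_apply contDiffAt_const

lemma contDiff_pd {n : ℕ} {φ : E2 → ℝ} (i : Fin 2)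
    (h : ContDiff ℝ (n+1) φ) : ContDiff ℝ n (pd i φ) := by
  have h1 : ContDiff ℝ n (fderiv ℝ φ) := h.fderiv_right (by norm_cast)
  exact h1.clm_apply contDiff_const

lemma div_W_eq (hακ : (2 ≤ α ∧ 0 ≤ κ) ∨ (0 < α ∧ 0 < κ))
    {u ξ : E2 → ℝ} {x : E2} (ε : ℝ)
    (hux : ContDiffAt ℝ (⊤ : ℕ∞) u x) (hξ : ContDiff ℝ 2 ξ) :
    pd 0 (fun y => gradSq u y * (gradSq u y + κ) ^ (α - 2) * ξ y * (pd 0 u y * pd 0 ξ y + pd 1 u y * pd 1 ξ y) * pd 0 u y - 1 / 2 * (gradSq u y * (gradSq u y + κ) ^ (α - 2) * (ξ y * ξ y) * (pd2 1 1 u y * pd 0 u y - pd2 1 0 u y * pd 1 u y))) x + pd 1 (fun y => gradSq u y * (gradSq u y + κ) ^ (α - 2) * ξ y * (pd 0 u y * pd 0 ξ y + pd 1 u y * pd 1 ξ y) * pd 1 u y - 1 / 2 * (gradSq u y * (gradSq u y + κ) ^ (α - 2) * (ξ y * ξ y) * (pd2 0 0 u y * pd 1 u y - pd2 0 1 u y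 * pd 0 u y))) x
      = hessGradSq u x * wtA α κ u x * ξ x ^ 2 + (ε * ((lap u x) ^ 2 * wtA α κ u x * ξ x ^ 2) + ((∑ i : Fin 2, pd i u x * pd i ξ x) ^ 2 * gradSq u x * (gradSq u x + κ) ^ (α - 2) + (2 * (wtB α κ u x * (∑ i : Fin 2, pd i u x * pd i ξ x) * infLap u x * ξ x) + ((∑ i : Fin 2, ∑ k : Fin 2, pd2 i k ξ x * pd k u x * pd i u x) * gradSq u x * (gradSq u x + κ) ^ (α - 2) * ξ x + (2 * (gradSq u x * (gradSq u x + κ) ^ (α - 2) * (∑ i : Fin 2, (∑ j : Fin 2, pd2 i j u x * pd j u x) * pd i ξ x) * ξ x) + (-infLap u x - ε * lap u x) * lap u x * wtA α κ u x * ξ x ^ 2))))) := by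
  have hu2 : ContDiffAt ℝ 2 u x := hux.of_le (by norm_cast)
  have hpku : ∀ k : Fin 2, ContDiffAt ℝ 2 (pd k u) x :=
    fun k => (contDiffAt_pd_top k hux).of_le (by norm_cast)
  have hp : ∀ j : Fin 2, HasFDerivAt (pd j u) (fderiv ℝ (pd j u) x) x :=
    fun j => hasFDerivAt_pd j hu2
  have hP : ∀ j k : Fin 2, HasFDerivAt (pd2 j k u) (fderiv ℝ (pd2 j k u) x) x :=
    fun j k => hasFDerivAt_pd j (hpku k)
  have hs : HasFDerivAt ξ (fderiv ℝ ξ x) x :=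
    ((hξ.differentiable (by norm_num)) x).hasFDerivAt
  have hS : ∀ j : Fin 2, HasFDerivAt (pd j ξ) (fderiv ℝ (pd j ξ) x) x :=
    fun j => hasFDerivAt_pd j hξ.contDiffAt
  have hgr : gradSq u = fun y => pd 0 u y * pd 0 u y + pd 1 u y * pd 1 u y := by
    funext y; simp [gradSq, Fin.sum_univ_two]; ring
  have hq : HasFDerivAt (gradSq u)
      (pd 0 u x • fderiv ℝ (pd 0 u) x + pd 0 u x • fderiv ℝ (pd 0 u) x
        + (pd 1 u x • fderiv ℝ (pd 1 u) x + pd 1 u x • fderiv ℝ (pd 1 u) x)) x := by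
    rw [hgr]; exact ((hp 0).mul (hp 0)).add ((hp 1).mul (hp 1))
  have hρ := rho_hasFDeriv hακ hq
  rw [pd_eval, pd_eval,
    show fderiv ℝ (fun y => gradSq u y * (gradSq u y + κ) ^ (α - 2) * ξ y * (pd 0 u y * pd 0 ξ y + pd 1 u y * pd 1 ξ y) * pd 0 u y - 1 / 2 * (gradSq u y * (gradSq u y + κ) ^ (α - 2) * (ξ y * ξ y) * (pd2 1 1 u y * pd 0 u y - pd2 1 0 u y * pd 1 u y))) x = _ from ((((hρ.mul hs).mul (((hp 0).mul (hS 0)).add ((hp 1).mul (hS 1)))).mul (hp 0)).sub (((hρ.mul (hs.mul hs)).mul (((hP 1 1).mul (hp 0)).sub ((hP 1 0).mul (hp 1)))).const_mul (1 / 2))).fderiv,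
    show fderiv ℝ (fun y => gradSq u y * (gradSq u y + κ) ^ (α - 2) * ξ y * (pd 0 u y * pd 0 ξ y + pd 1 u y * pd 1 ξ y) * pd 1 u y - 1 / 2 * (gradSq u y * (gradSq u y + κ) ^ (α - 2) * (ξ y * ξ y) * (pd2 0 0 u y * pd 1 u y - pd2 0 1 u y * pd 0 u y))) x = _ from ((((hρ.mul hs).mul (((hp 0).mul (hS 0)).add ((hp 1).mul (hS 1)))).mul (hp 1)).sub (((hρ.mul (hs.mul hs)).mul (((hP 0 0).mul (hp 1)).sub ((hP 0 1).mul (hp 0)))).const_mul (1 / 2))).fderiv]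
  simp only [ContinuousLinearMap.add_apply, ContinuousLinearMap.coe_sub', Pi.sub_apply,
    ContinuousLinearMap.coe_smul', Pi.smul_apply, smul_eq_mul, fderiv_single_pd, pd_pd, pd_pd2, Pi.mul_apply, Pi.add_apply]
  rw [wtA_eq hακ]
  simp only [hessGradSq, infLap, lap, gradSq, Fin.sum_univ_two]
  simp only [pd2_comm hu2 1 0, pd2_comm (hpku 0) 1 0, pd2_comm (hpku 1) 1 0]
  ring

lemma W_diff (hακ : (2 ≤ α ∧ 0 ≤ κ) ∨ (0 < α ∧ 0 < κ))
    {u ξ : E2 → ℝ} {x : E2}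
    (hux : ContDiffAt ℝ (⊤ : ℕ∞) u x) (hξ : ContDiff ℝ 2 ξ) :
    DifferentiableAt ℝ (fun y => gradSq u y * (gradSq u y + κ) ^ (α - 2) * ξ y * (pd 0 u y * pd 0 ξ y + pd 1 u y * pd 1 ξ y) * pd 0 u y - 1 / 2 * (gradSq u y * (gradSq u y + κ) ^ (α - 2) * (ξ y * ξ y) * (pd2 1 1 u y * pd 0 u y - pd2 1 0 u y * pd 1 u y))) x ∧
    DifferentiableAt ℝ (fun y => gradSq u y * (gradSq u y + κ) ^ (α - 2) * ξ y * (pd 0 u y * pd 0 ξ y + pd 1 u y * pd 1 ξ y) * pd 1 u y - 1 / 2 * (gradSq u y * (gradSq u y + κ) ^ (α - 2) * (ξ y * ξ y) * (pd2 0 0 u y * pd 1 u y - pd2 0 1 u y * pd 0 u y))) x := by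
  have hu2 : ContDiffAt ℝ 2 u x := hux.of_le (by norm_cast)
  have hpku : ∀ k : Fin 2, ContDiffAt ℝ 2 (pd k u) x :=
    fun k => (contDiffAt_pd_top k hux).of_le (by norm_cast)
  have hp : ∀ j : Fin 2, HasFDerivAt (pd j u) (fderiv ℝ (pd j u) x) x :=
    fun j => hasFDerivAt_pd j hu2
  have hP : ∀ j k : Fin 2, HasFDerivAt (pd2 j k u) (fderiv ℝ (pd2 j k u) x) x :=
    fun j k => hasFDerivAt_pd j (hpku k)
  have hs : HasFDerivAt ξ (fderiv ℝ ξ x) x :=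
    ((hξ.differentiable (by norm_num)) x).hasFDerivAt
  have hS : ∀ j : Fin 2, HasFDerivAt (pd j ξ) (fderiv ℝ (pd j ξ) x) x :=
    fun j => hasFDerivAt_pd j hξ.contDiffAt
  have hgr : gradSq u = fun y => pd 0 u y * pd 0 u y + pd 1 u y * pd 1 u y := by
    funext y; simp [gradSq, Fin.sum_univ_two]; ring
  have hq : HasFDerivAt (gradSq u)
      (pd 0 u x • fderiv ℝ (pd 0 u) x + pd 0 u x • fderiv ℝ (pd 0 u) x
        + (pd 1 u x • fderiv ℝ (pd 1 u) x + pd 1 u x • fderiv ℝ (pd 1 u) x)) x := by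
    rw [hgr]; exact ((hp 0).mul (hp 0)).add ((hp 1).mul (hp 1))
  have hρ := rho_hasFDeriv hακ hq
  exact ⟨((((hρ.mul hs).mul (((hp 0).mul (hS 0)).add ((hp 1).mul (hS 1)))).mul (hp 0)).sub (((hρ.mul (hs.mul hs)).mul (((hP 1 1).mul (hp 0)).sub ((hP 1 0).mul (hp 1)))).const_mul (1 / 2))).differentiableAt, ((((hρ.mul hs).mul (((hp 0).mul (hS 0)).add ((hp 1).mul (hS 1)))).mul (hp 1)).sub (((hρ.mul (hs.mul hs)).mul (((hP 0 0).mul (hp 1)).sub ((hP 0 1).mul (hp 0)))).const_mul (1 / 2))).differentiableAt⟩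

/-- The fundamental integral identity for the regularized equation
`-Δ_∞u - εΔu = g`, for `(α ≥ 2, κ ≥ 0)` or `(α > 0, κ > 0)`. -/
theorem statement19 (U : Set E2) (hU : IsOpen U) (hUb : Bornology.IsBounded U)
    (ε : ℝ) (hε : 0 < ε) (u g : E2 → ℝ)
    (hu : ContDiffOn ℝ (⊤ : ℕ∞) u U) (hg : ContDiffOn ℝ (⊤ : ℕ∞) g U)
    (heq : ∀ x ∈ U, -infLap u x - ε * lap u x = g x)
    (ξ : E2 → ℝ) (hξ : ContDiff ℝ 2 ξ) (hξc : HasCompactSupport ξ)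
    (hξU : tsupport ξ ⊆ U)
    (α κ : ℝ) (hακ : (2 ≤ α ∧ 0 ≤ κ) ∨ (0 < α ∧ 0 < κ)) :
    (∫ x in U, hessGradSq u x * wtA α κ u x * ξ x ^ 2)
      + ε * (∫ x in U, (lap u x) ^ 2 * wtA α κ u x * ξ x ^ 2)
      + (∫ x in U, (∑ i : Fin 2, pd i u x * pd i ξ x) ^ 2 *
          gradSq u x * (gradSq u x + κ) ^ (α - 2))
    = -2 * (∫ x in U, wtB α κ u x *
            (∑ i : Fin 2, pd i u x * pd i ξ x) * infLap u x * ξ x)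
      - (∫ x in U, (∑ i : Fin 2, ∑ k : Fin 2,
            pd2 i k ξ x * pd k u x * pd i u x) *
          gradSq u x * (gradSq u x + κ) ^ (α - 2) * ξ x)
      - 2 * (∫ x in U, gradSq u x * (gradSq u x + κ) ^ (α - 2) *
          (∑ i : Fin 2, (∑ j : Fin 2, pd2 i j u x * pd j u x) * pd i ξ x) * ξ x)
      - (∫ x in U, g x * lap u x * wtA α κ u x * ξ x ^ 2) := by
  have hKcl : IsClosed (tsupport ξ) := isClosed_tsupport ξ
  have hCAt : ∀ x ∈ U, ContDiffAt ℝ (⊤ : ℕ∞) u x := fun x hx => hu.contDiffAt (hU.mem_nhds hx)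
  have hxi0 : ∀ x ∉ tsupport ξ, ξ x = 0 := fun x hx => image_eq_zero_of_notMem_tsupport hx
  have hxi1 : ∀ x ∉ tsupport ξ, ∀ i : Fin 2, pd i ξ x = 0 :=
    fun x hx i => pd_zero_outside hKcl (fun y hy => image_eq_zero_of_notMem_tsupport hy) hx i
  have hcp : ∀ i : Fin 2, ContinuousOn (pd i u) U := fun i x hx =>
    ((contDiffAt_pd_top i (hCAt x hx)).continuousAt).continuousWithinAt
  have hcP : ∀ i j : Fin 2, ContinuousOn (pd2 i j u) U := fun i j x hx =>
    ((contDiffAt_pd_top i (contDiffAt_pd_top j (hCAt x hx))).continuousAt).continuousWithinAt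
  have hcxi : ContinuousOn ξ U := hξ.continuous.continuousOn
  have hξ2 : ContDiff ℝ ((1:ℕ)+1) ξ := by exact_mod_cast hξ
  have hcS : ∀ i : Fin 2, ContinuousOn (pd i ξ) U := fun i =>
    ((contDiff_pd (n := 1) i hξ2).continuous).continuousOn
  have hcS2 : ∀ i j : Fin 2, ContinuousOn (pd2 i j ξ) U := fun i j =>
    ((contDiff_pd (n := 0) i (contDiff_pd (n := 1) j hξ2)).continuous).continuousOn
  have hcg2 : ContinuousOn (gradSq u) U := by
    have hgr : gradSq u = fun x => pd 0 u x ^ 2 + pd 1 u x ^ 2 := by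
      funext y; simp [gradSq, Fin.sum_univ_two]
    rw [hgr]; exact ((hcp 0).pow 2).add ((hcp 1).pow 2)
  have hcwp : ContinuousOn (fun x => (gradSq u x + κ) ^ (α - 2)) U := by
    apply (hcg2.add continuousOn_const).rpow_const
    intro x hx
    by_cases hκ0 : κ = 0
    · exact Or.inr (by have := alpha_two hακ hκ0; linarith)
    · exact Or.inl (ne_of_gt (by
        change 0 < gradSq u x + κ
        have h1 := gradSq_nonneg u x; have h2 := kappa_pos hακ hκ0; linarith))
  have hcA : ContinuousOn (wtA α κ u) U := by
    by_cases hκ0 : κ = 0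
    · have hh : wtA α κ u = fun x => α * gradSq u x ^ (α - 2) := by
        funext y; simp only [wtA, if_pos hκ0]
      rw [hh]
      refine continuousOn_const.mul (hcg2.rpow_const fun x hx => Or.inr ?_)
      have := alpha_two hακ hκ0; linarith
    · have hh : wtA α κ u = fun x =>
          (gradSq u x + κ) ^ (α - 3) * (2 * (gradSq u x + κ) + (α - 2) * gradSq u x) := by
        funext y; simp only [wtA, if_neg hκ0]
      rw [hh]
      have hb : ∀ x ∈ U, gradSq u x + κ ≠ 0 := fun x hx => ne_of_gt (by
        have h1 := gradSq_nonneg u x; have h2 := kappa_pos hακ hκ0; linarith)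
      exact ((hcg2.add continuousOn_const).rpow_const (fun x hx => Or.inl (hb x hx))).mul
        ((continuousOn_const.mul (hcg2.add continuousOn_const)).add
          (continuousOn_const.mul hcg2))
  have hcB : ContinuousOn (wtB α κ u) U := by
    by_cases hκ0 : κ = 0
    · have hh : wtB α κ u = fun x => (α - 1) * gradSq u x ^ (α - 2) := by
        funext y; simp only [wtB, if_pos hκ0]
      rw [hh]
      refine continuousOn_const.mul (hcg2.rpow_const fun x hx => Or.inr ?_)
      have := alpha_two hακ hκ0; linarith
    · have hh : wtB α κ u = fun x =>
          (gradSq u x + κ) ^ (α - 3) * ((gradSq u x + κ) + (α - 2) * gradSq u x) := by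
        funext y; simp only [wtB, if_neg hκ0]
      rw [hh]
      have hb : ∀ x ∈ U, gradSq u x + κ ≠ 0 := fun x hx => ne_of_gt (by
        have h1 := gradSq_nonneg u x; have h2 := kappa_pos hακ hκ0; linarith)
      exact ((hcg2.add continuousOn_const).rpow_const (fun x hx => Or.inl (hb x hx))).mul
        ((hcg2.add continuousOn_const).add (continuousOn_const.mul hcg2))
  have hclap : ContinuousOn (lap u) U := (hcP 0 0).add (hcP 1 1)
  have hcInf : ContinuousOn (infLap u) U :=
    continuousOn_finset_sum _ fun i _ => continuousOn_finset_sum _ fun j _ =>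
      ((hcp i).mul (hcp j)).mul (hcP i j)
  have hcHG : ContinuousOn (hessGradSq u) U :=
    continuousOn_finset_sum _ fun i _ =>
      (continuousOn_finset_sum _ fun j _ => (hcP i j).mul (hcp j)).pow 2
  have hcT : ContinuousOn (fun x => ∑ i : Fin 2, pd i u x * pd i ξ x) U :=
    continuousOn_finset_sum _ fun i _ => (hcp i).mul (hcS i)
  have hcS2sum : ContinuousOn
      (fun x => ∑ i : Fin 2, ∑ k : Fin 2, pd2 i k ξ x * pd k u x * pd i u x) U :=
    continuousOn_finset_sum _ fun i _ => continuousOn_finset_sum _ fun k _ =>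
      ((hcS2 i k).mul (hcp k)).mul (hcp i)
  have hchS : ContinuousOn
      (fun x => ∑ i : Fin 2, (∑ j : Fin 2, pd2 i j u x * pd j u x) * pd i ξ x) U :=
    continuousOn_finset_sum _ fun i _ =>
      (continuousOn_finset_sum _ fun j _ => (hcP i j).mul (hcp j)).mul (hcS i)
  have hcgU : ContinuousOn g U := hg.continuousOn
  have hc1 : ContinuousOn (fun x => hessGradSq u x * wtA α κ u x * ξ x ^ 2) U := (hcHG.mul hcA).mul (hcxi.pow 2)
  have hc2 : ContinuousOn (fun x => (lap u x) ^ 2 * wtA α κ u x * ξ x ^ 2) U := ((hclap.pow 2).mul hcA).mul (hcxi.pow 2)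
  have hc3 : ContinuousOn (fun x => (∑ i : Fin 2, pd i u x * pd i ξ x) ^ 2 * gradSq u x * (gradSq u x + κ) ^ (α - 2)) U := ((hcT.pow 2).mul hcg2).mul hcwp
  have hc4 : ContinuousOn (fun x => wtB α κ u x * (∑ i : Fin 2, pd i u x * pd i ξ x) * infLap u x * ξ x) U := ((hcB.mul hcT).mul hcInf).mul hcxi
  have hc5 : ContinuousOn (fun x => (∑ i : Fin 2, ∑ k : Fin 2, pd2 i k ξ x * pd k u x * pd i u x) * gradSq u x * (gradSq u x + κ) ^ (α - 2) * ξ x) U := ((hcS2sum.mul hcg2).mul hcwp).mul hcxi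
  have hc6 : ContinuousOn (fun x => gradSq u x * (gradSq u x + κ) ^ (α - 2) * (∑ i : Fin 2, (∑ j : Fin 2, pd2 i j u x * pd j u x) * pd i ξ x) * ξ x) U := ((hcg2.mul hcwp).mul hchS).mul hcxi
  have hc7 : ContinuousOn (fun x => g x * lap u x * wtA α κ u x * ξ x ^ 2) U := ((hcgU.mul hclap).mul hcA).mul (hcxi.pow 2)
  have glue : ∀ f : E2 → ℝ, ContinuousOn f U → (∀ x, x ∉ tsupport ξ → f x = 0) →
      IntegrableOn f U volume := by
    intro f hfc hf0
    have hfC : Continuous f := by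
      rw [continuous_iff_continuousAt]
      intro x
      by_cases hx : x ∈ U
      · exact hfc.continuousAt (hU.mem_nhds hx)
      · have hx' : x ∈ (tsupport ξ)ᶜ := fun h => hx (hξU h)
        have hev : f =ᶠ[nhds x] (fun _ => (0:ℝ)) :=
          Filter.eventuallyEq_of_mem (hKcl.isOpen_compl.mem_nhds hx') (fun y hy => hf0 y hy)
        exact continuousAt_const.congr hev.symm
    have hsupp : HasCompactSupport f := by
      refine IsCompact.of_isClosed_subset hξc (isClosed_tsupport f) ?_
      refine closure_minimal (fun x hx => ?_) hKcl
      by_contra hxx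
      exact hx (hf0 x hxx)
    exact (hfC.integrable_of_hasCompactSupport hsupp).integrableOn
  have hI1 : IntegrableOn (fun x => hessGradSq u x * wtA α κ u x * ξ x ^ 2) U volume :=
    glue _ hc1 (fun x hx => by simp [hxi0 x hx])
  have hI2 : IntegrableOn (fun x => (lap u x) ^ 2 * wtA α κ u x * ξ x ^ 2) U volume :=
    glue _ hc2 (fun x hx => by simp [hxi0 x hx])
  have hI3 : IntegrableOn (fun x => (∑ i : Fin 2, pd i u x * pd i ξ x) ^ 2 * gradSq u x * (gradSq u x + κ) ^ (α - 2)) U volume :=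
    glue _ hc3 (fun x hx => by simp [Fin.sum_univ_two, hxi1 x hx 0, hxi1 x hx 1])
  have hI4 : IntegrableOn (fun x => wtB α κ u x * (∑ i : Fin 2, pd i u x * pd i ξ x) * infLap u x * ξ x) U volume :=
    glue _ hc4 (fun x hx => by simp [hxi0 x hx])
  have hI5 : IntegrableOn (fun x => (∑ i : Fin 2, ∑ k : Fin 2, pd2 i k ξ x * pd k u x * pd i u x) * gradSq u x * (gradSq u x + κ) ^ (α - 2) * ξ x) U volume :=
    glue _ hc5 (fun x hx => by simp [hxi0 x hx])
  have hI6 : IntegrableOn (fun x => gradSq u x * (gradSq u x + κ) ^ (α - 2) * (∑ i : Fin 2, (∑ j : Fin 2, pd2 i j u x * pd j u x) * pd i ξ x) * ξ x) U volume :=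
    glue _ hc6 (fun x hx => by simp [hxi0 x hx])
  have hI7 : IntegrableOn (fun x => g x * lap u x * wtA α κ u x * ξ x ^ 2) U volume :=
    glue _ hc7 (fun x hx => by simp [hxi0 x hx])
  have hz0 : ∀ x ∉ tsupport ξ, (fun y => gradSq u y * (gradSq u y + κ) ^ (α - 2) * ξ y * (pd 0 u y * pd 0 ξ y + pd 1 u y * pd 1 ξ y) * pd 0 u y - 1 / 2 * (gradSq u y * (gradSq u y + κ) ^ (α - 2) * (ξ y * ξ y) * (pd2 1 1 u y * pd 0 u y - pd2 1 0 u y * pd 1 u y))) x = 0 := fun x hx => by simp [hxi0 x hx]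
  have hz1 : ∀ x ∉ tsupport ξ, (fun y => gradSq u y * (gradSq u y + κ) ^ (α - 2) * ξ y * (pd 0 u y * pd 0 ξ y + pd 1 u y * pd 1 ξ y) * pd 1 u y - 1 / 2 * (gradSq u y * (gradSq u y + κ) ^ (α - 2) * (ξ y * ξ y) * (pd2 0 0 u y * pd 1 u y - pd2 0 1 u y * pd 0 u y))) x = 0 := fun x hx => by simp [hxi0 x hx]
  have hd0 : ∀ x : E2, HasFDerivAt (fun y => gradSq u y * (gradSq u y + κ) ^ (α - 2) * ξ y * (pd 0 u y * pd 0 ξ y + pd 1 u y * pd 1 ξ y) * pd 0 u y - 1 / 2 * (gradSq u y * (gradSq u y + κ) ^ (α - 2) * (ξ y * ξ y) * (pd2 1 1 u y * pd 0 u y - pd2 1 0 u y * pd 1 u y))) (fderiv ℝ (fun y => gradSq u y * (gradSq u y + κ) ^ (α - 2) * ξ y * (pd 0 u y * pd 0 ξ y + pd 1 u y * pd 1 ξ y) * pd 0 u y - 1 / 2 * (gradSq u y * (gradSq u y + κ) ^ (α - 2) * (ξ y * ξ y) * (pd2 1 1 u y * pd 0 u y - pd2 1 0 u y * pd 1 u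 y))) x) x := by
    intro x
    by_cases hx : x ∈ U
    · exact ((W_diff hακ (hCAt x hx) hξ).1).hasFDerivAt
    · have hxK : x ∉ tsupport ξ := fun h => hx (hξU h)
      have hev : (fun y => gradSq u y * (gradSq u y + κ) ^ (α - 2) * ξ y * (pd 0 u y * pd 0 ξ y + pd 1 u y * pd 1 ξ y) * pd 0 u y - 1 / 2 * (gradSq u y * (gradSq u y + κ) ^ (α - 2) * (ξ y * ξ y) * (pd2 1 1 u y * pd 0 u y - pd2 1 0 u y * pd 1 u y))) =ᶠ[nhds x] (fun _ => (0:ℝ)) :=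
        Filter.eventuallyEq_of_mem (hKcl.isOpen_compl.mem_nhds hxK) (fun y hy => hz0 y hy)
      exact (((hasFDerivAt_const (0:ℝ) x).congr_of_eventuallyEq hev).differentiableAt).hasFDerivAt
  have hd1 : ∀ x : E2, HasFDerivAt (fun y => gradSq u y * (gradSq u y + κ) ^ (α - 2) * ξ y * (pd 0 u y * pd 0 ξ y + pd 1 u y * pd 1 ξ y) * pd 1 u y - 1 / 2 * (gradSq u y * (gradSq u y + κ) ^ (α - 2) * (ξ y * ξ y) * (pd2 0 0 u y * pd 1 u y - pd2 0 1 u y * pd 0 u y))) (fderiv ℝ (fun y => gradSq u y * (gradSq u y + κ) ^ (α - 2) * ξ y * (pd 0 u y * pd 0 ξ y + pd 1 u y * pd 1 ξ y) * pd 1 u y - 1 / 2 * (gradSq u y * (gradSq u y + κ) ^ (α - 2) * (ξ y * ξ y) * (pd2 0 0 u y * pd 1 u y - pd2 0 1 u y * pd 0 u y))) x) x := by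
    intro x
    by_cases hx : x ∈ U
    · exact ((W_diff hακ (hCAt x hx) hξ).2).hasFDerivAt
    · have hxK : x ∉ tsupport ξ := fun h => hx (hξU h)
      have hev : (fun y => gradSq u y * (gradSq u y + κ) ^ (α - 2) * ξ y * (pd 0 u y * pd 0 ξ y + pd 1 u y * pd 1 ξ y) * pd 1 u y - 1 / 2 * (gradSq u y * (gradSq u y + κ) ^ (α - 2) * (ξ y * ξ y) * (pd2 0 0 u y * pd 1 u y - pd2 0 1 u y * pd 0 u y))) =ᶠ[nhds x] (fun _ => (0:ℝ)) :=
        Filter.eventuallyEq_of_mem (hKcl.isOpen_compl.mem_nhds hxK) (fun y hy => hz1 y hy)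
      exact (((hasFDerivAt_const (0:ℝ) x).congr_of_eventuallyEq hev).differentiableAt).hasFDerivAt
  have hceq : Set.EqOn (fun x => hessGradSq u x * wtA α κ u x * ξ x ^ 2 + (ε * ((lap u x) ^ 2 * wtA α κ u x * ξ x ^ 2) + ((∑ i : Fin 2, pd i u x * pd i ξ x) ^ 2 * gradSq u x * (gradSq u x + κ) ^ (α - 2) + (2 * (wtB α κ u x * (∑ i : Fin 2, pd i u x * pd i ξ x) * infLap u x * ξ x) + ((∑ i : Fin 2, ∑ k : Fin 2, pd2 i k ξ x * pd k u x * pd i u x) * gradSq u x * (gradSq u x + κ) ^ (α - 2) * ξ x + (2 * (gradSq u x * (gradSq u x + κ) ^ (α - 2) * (∑ i : Fin 2, (∑ j : Fin 2, pd2 i j u x * pd j u x) * pd i ξ x) * ξ x) + g x * lap u x * wtA α κ u x * ξ x ^ 2)))))) (fun x => pd 0 (fun y => gradSq u y * (gradSq u y + κ) ^ (α - 2) * ξ y * (pd 0 u y * pd 0 ξ y + pd 1 u y * pd 1 ξ y) * pd 0 u y - 1 / 2 * (gradSq u y * (gradSq u y + κ) ^ (α - 2) * (ξ y * ξ y) *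 (pd2 1 1 u y * pd 0 u y - pd2 1 0 u y * pd 1 u y))) x + pd 1 (fun y => gradSq u y * (gradSq u y + κ) ^ (α - 2) * ξ y * (pd 0 u y * pd 0 ξ y + pd 1 u y * pd 1 ξ y) * pd 1 u y - 1 / 2 * (gradSq u y * (gradSq u y + κ) ^ (α - 2) * (ξ y * ξ y) * (pd2 0 0 u y * pd 1 u y - pd2 0 1 u y * pd 0 u y))) x) U := by
    intro x hx
    have h := div_W_eq hακ ε (hCAt x hx) hξ
    rw [heq x hx] at h
    exact h.symm
  have hDIVz : ∀ x ∉ tsupport ξ, pd 0 (fun y => gradSq u y * (gradSq u y + κ) ^ (α - 2) * ξ y * (pd 0 u y * pd 0 ξ y + pd 1 u y * pd 1 ξ y) * pd 0 u y - 1 / 2 * (gradSq u y * (gradSq u y + κ) ^ (α - 2) * (ξ y * ξ y) * (pd2 1 1 u y * pd 0 u y - pd2 1 0 u y * pd 1 u y))) x + pd 1 (fun y => gradSq u y * (gradSq u y + κ) ^ (α - 2) * ξ y * (pd 0 u y * pd 0 ξ y + pd 1 u y * pd 1 ξ y) * pd 1 u y - 1 / 2 * (gradSq u y * (gradSq u y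 + κ) ^ (α - 2) * (ξ y * ξ y) * (pd2 0 0 u y * pd 1 u y - pd2 0 1 u y * pd 0 u y))) x = 0 := by
    intro x hx
    rw [pd_zero_outside hKcl hz0 hx 0, pd_zero_outside hKcl hz1 hx 1, add_zero]
  have hDIVcont : Continuous (fun x => pd 0 (fun y => gradSq u y * (gradSq u y + κ) ^ (α - 2) * ξ y * (pd 0 u y * pd 0 ξ y + pd 1 u y * pd 1 ξ y) * pd 0 u y - 1 / 2 * (gradSq u y * (gradSq u y + κ) ^ (α - 2) * (ξ y * ξ y) * (pd2 1 1 u y * pd 0 u y - pd2 1 0 u y * pd 1 u y))) x + pd 1 (fun y => gradSq u y * (gradSq u y + κ) ^ (α - 2) * ξ y * (pd 0 u y * pd 0 ξ y + pd 1 u y * pd 1 ξ y) * pd 1 u y - 1 / 2 * (gradSq u y * (gradSq u y + κ) ^ (α - 2) * (ξ y * ξ y) * (pd2 0 0 u y * pd 1 u y - pd2 0 1 u y * pd 0 u y))) x) := by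
    rw [continuous_iff_continuousAt]
    intro x
    by_cases hx : x ∈ U
    · have hcF : ContinuousOn (fun x => hessGradSq u x * wtA α κ u x * ξ x ^ 2 + (ε * ((lap u x) ^ 2 * wtA α κ u x * ξ x ^ 2) + ((∑ i : Fin 2, pd i u x * pd i ξ x) ^ 2 * gradSq u x * (gradSq u x + κ) ^ (α - 2) + (2 * (wtB α κ u x * (∑ i : Fin 2, pd i u x * pd i ξ x) * infLap u x * ξ x) + ((∑ i : Fin 2, ∑ k : Fin 2, pd2 i k ξ x * pd k u x * pd i u x) * gradSq u x * (gradSq u x + κ) ^ (α - 2) * ξ x + (2 * (gradSq u x * (gradSq u x + κ) ^ (α - 2) * (∑ i : Fin 2, (∑ j : Fin 2, pd2 i j u x * pd j u x) * pd i ξ x) * ξ x) + g x * lap u x * wtA α κ u x * ξ x ^ 2)))))) U :=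
        hc1.add ((continuousOn_const.mul hc2).add (hc3.add ((continuousOn_const.mul hc4).add
          (hc5.add ((continuousOn_const.mul hc6).add hc7)))))
      exact ((hcF.congr (fun y hy => (hceq hy).symm)).continuousAt (hU.mem_nhds hx))
    · have hxK : x ∉ tsupport ξ := fun h => hx (hξU h)
      have hev : (fun x => pd 0 (fun y => gradSq u y * (gradSq u y + κ) ^ (α - 2) * ξ y * (pd 0 u y * pd 0 ξ y + pd 1 u y * pd 1 ξ y) * pd 0 u y - 1 / 2 * (gradSq u y * (gradSq u y + κ) ^ (α - 2) * (ξ y * ξ y) * (pd2 1 1 u y * pd 0 u y - pd2 1 0 u y * pd 1 u y))) x + pd 1 (fun y => gradSq u y * (gradSq u y + κ) ^ (α - 2) * ξ y * (pd 0 u y * pd 0 ξ y + pd 1 u y * pd 1 ξ y) * pd 1 u y - 1 / 2 * (gradSq u y * (gradSq u y + κ) ^ (α - 2) * (ξ y * ξ y) * (pd2 0 0 u y * pd 1 u y - pd2 0 1 u y * pd 0 u y))) x) =ᶠ[nhds x] (fun _ => (0:ℝ)) :=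
        Filter.eventuallyEq_of_mem (hKcl.isOpen_compl.mem_nhds hxK)
          (fun y hy => hDIVz y hy)
      exact continuousAt_const.congr hev.symm
  have hdiv0 : (∫ x in U, hessGradSq u x * wtA α κ u x * ξ x ^ 2 + (ε * ((lap u x) ^ 2 * wtA α κ u x * ξ x ^ 2) + ((∑ i : Fin 2, pd i u x * pd i ξ x) ^ 2 * gradSq u x * (gradSq u x + κ) ^ (α - 2) + (2 * (wtB α κ u x * (∑ i : Fin 2, pd i u x * pd i ξ x) * infLap u x * ξ x) + ((∑ i : Fin 2, ∑ k : Fin 2, pd2 i k ξ x * pd k u x * pd i u x) * gradSq u x * (gradSq u x + κ) ^ (α - 2) * ξ x + (2 * (gradSq u x * (gradSq u x + κ) ^ (α - 2) * (∑ i : Fin 2, (∑ j : Fin 2, pd2 i j u x * pd j u x) * pd i ξ x) * ξ x) + g x * lap u x * wtA α κ u x * ξ x ^ 2)))))) = 0 := by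
    rw [setIntegral_congr_fun hU.measurableSet hceq]
    rw [setIntegral_eq_integral_of_forall_compl_eq_zero
      (fun x hx => hDIVz x (fun h => hx (hξU h)))]
    exact divergence_integral_zero (fun y => gradSq u y * (gradSq u y + κ) ^ (α - 2) * ξ y * (pd 0 u y * pd 0 ξ y + pd 1 u y * pd 1 ξ y) * pd 0 u y - 1 / 2 * (gradSq u y * (gradSq u y + κ) ^ (α - 2) * (ξ y * ξ y) * (pd2 1 1 u y * pd 0 u y - pd2 1 0 u y * pd 1 u y))) (fun y => gradSq u y * (gradSq u y + κ) ^ (α - 2) * ξ y * (pd 0 u y * pd 0 ξ y + pd 1 u y * pd 1 ξ y) * pd 1 u y - 1 / 2 * (gradSq u y * (gradSq u y + κ) ^ (α - 2) * (ξ y * ξ y) * (pd2 0 0 u y * pd 1 u y - pd2 0 1 u y * pd 0 u y))) (tsupport ξ) hξc hd0 hd1 hz0 hz1 hDIVcont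
  have hT6 : IntegrableOn (fun x => 2 * (gradSq u x * (gradSq u x + κ) ^ (α - 2) * (∑ i : Fin 2, (∑ j : Fin 2, pd2 i j u x * pd j u x) * pd i ξ x) * ξ x) + g x * lap u x * wtA α κ u x * ξ x ^ 2) U volume := (hI6.const_mul 2).add hI7
  have hT5 : IntegrableOn (fun x => (∑ i : Fin 2, ∑ k : Fin 2, pd2 i k ξ x * pd k u x * pd i u x) * gradSq u x * (gradSq u x + κ) ^ (α - 2) * ξ x + (2 * (gradSq u x * (gradSq u x + κ) ^ (α - 2) * (∑ i : Fin 2, (∑ j : Fin 2, pd2 i j u x * pd j u x) * pd i ξ x) * ξ x) + g x * lap u x * wtA α κ u x * ξ x ^ 2)) U volume := hI5.add hT6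
  have hT4 : IntegrableOn (fun x => 2 * (wtB α κ u x * (∑ i : Fin 2, pd i u x * pd i ξ x) * infLap u x * ξ x) + ((∑ i : Fin 2, ∑ k : Fin 2, pd2 i k ξ x * pd k u x * pd i u x) * gradSq u x * (gradSq u x + κ) ^ (α - 2) * ξ x + (2 * (gradSq u x * (gradSq u x + κ) ^ (α - 2) * (∑ i : Fin 2, (∑ j : Fin 2, pd2 i j u x * pd j u x) * pd i ξ x) * ξ x) + g x * lap u x * wtA α κ u x * ξ x ^ 2))) U volume :=
    (hI4.const_mul 2).add hT5
  have hT3 : IntegrableOn (fun x => (∑ i : Fin 2, pd i u x * pd i ξ x) ^ 2 * gradSq u x * (gradSq u x + κ) ^ (α - 2) + (2 * (wtB α κ u x * (∑ i : Fin 2, pd i u x * pd i ξ x) * infLap u x * ξ x) + ((∑ i : Fin 2, ∑ k : Fin 2, pd2 i k ξ x * pd k u x * pd i u x) * gradSq u x * (gradSq u x + κ) ^ (α - 2) * ξ x + (2 * (gradSq u x * (gradSq u x + κ) ^ (α - 2) * (∑ i : Fin 2, (∑ j : Fin 2, pd2 i j u x * pd j u x) * pd i ξ x) * ξ x) + g x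 * lap u x * wtA α κ u x * ξ x ^ 2)))) U volume :=
    hI3.add hT4
  have hT2 : IntegrableOn (fun x => ε * ((lap u x) ^ 2 * wtA α κ u x * ξ x ^ 2) + ((∑ i : Fin 2, pd i u x * pd i ξ x) ^ 2 * gradSq u x * (gradSq u x + κ) ^ (α - 2) + (2 * (wtB α κ u x * (∑ i : Fin 2, pd i u x * pd i ξ x) * infLap u x * ξ x) + ((∑ i : Fin 2, ∑ k : Fin 2, pd2 i k ξ x * pd k u x * pd i u x) * gradSq u x * (gradSq u x + κ) ^ (α - 2) * ξ x +
      (2 * (gradSq u x * (gradSq u x + κ) ^ (α - 2) * (∑ i : Fin 2, (∑ j : Fin 2, pd2 i j u x * pd j u x) * pd i ξ x) * ξ x) + g x * lap u x * wtA α κ u x * ξ x ^ 2))))) U volume := (hI2.const_mul ε).add hT3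
  have hsplit : (∫ x in U, hessGradSq u x * wtA α κ u x * ξ x ^ 2 + (ε * ((lap u x) ^ 2 * wtA α κ u x * ξ x ^ 2) + ((∑ i : Fin 2, pd i u x * pd i ξ x) ^ 2 * gradSq u x * (gradSq u x + κ) ^ (α - 2) + (2 * (wtB α κ u x * (∑ i : Fin 2, pd i u x * pd i ξ x) * infLap u x * ξ x) + ((∑ i : Fin 2, ∑ k : Fin 2, pd2 i k ξ x * pd k u x * pd i u x) * gradSq u x * (gradSq u x + κ) ^ (α - 2) * ξ x + (2 * (gradSq u x * (gradSq u x + κ) ^ (α - 2) * (∑ i : Fin 2, (∑ j : Fin 2, pd2 i j u x * pd j u x) * pd i ξ x) * ξ x) + g x * lap u x * wtA α κ u x * ξ x ^ 2)))))) =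
      (∫ x in U, hessGradSq u x * wtA α κ u x * ξ x ^ 2) + (ε * (∫ x in U, (lap u x) ^ 2 * wtA α κ u x * ξ x ^ 2) + ((∫ x in U, (∑ i : Fin 2, pd i u x * pd i ξ x) ^ 2 * gradSq u x * (gradSq u x + κ) ^ (α - 2)) +
        (2 * (∫ x in U, wtB α κ u x * (∑ i : Fin 2, pd i u x * pd i ξ x) * infLap u x * ξ x) + ((∫ x in U, (∑ i : Fin 2, ∑ k : Fin 2, pd2 i k ξ x * pd k u x * pd i u x) * gradSq u x * (gradSq u x + κ) ^ (α - 2) * ξ x) +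
          (2 * (∫ x in U, gradSq u x * (gradSq u x + κ) ^ (α - 2) * (∑ i : Fin 2, (∑ j : Fin 2, pd2 i j u x * pd j u x) * pd i ξ x) * ξ x) + (∫ x in U, g x * lap u x * wtA α κ u x * ξ x ^ 2)))))) := by
    rw [integral_add hI1 hT2,
        integral_add (hI2.const_mul ε) hT3,
        integral_add hI3 hT4,
        integral_add (hI4.const_mul 2) hT5,
        integral_add hI5 hT6,
        integral_add (hI6.const_mul 2) hI7,
        integral_const_mul, integral_const_mul, integral_const_mul]
  rw [hsplit] at hdiv0
  linarith [hdiv0]
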